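/- arXiv:1012.0780 — 2 statements merged into one kernel-verified Lean document; each statement's English description precedes it below -/
import Mathlib

section
/- Let I = {(l,m) ∈ ℤ² : l ≥ 1, 0 ≤ m ≤ l−1} and Ĩ = {(l,m) ∈ ℤ² : l ≥ 2, 1 ≤ m ≤ l−1}. With R(l,m)=(−l,−m), S(l,m)=(m,l), T(l,m)=(l−m,−m), the set ℤ² decomposes as the disjoint union I ⊔ R(I) ⊔ S(I) ⊔ RS(I) ⊔ T(Ĩ) ⊔ RT(Ĩ) ⊔ {(l,m) : l = m}. -/
/-- `ℤ²` decomposes as the disjoint union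
`I ⊔ R(I) ⊔ S(I) ⊔ RS(I) ⊔ T(Ĩ) ⊔ RT(Ĩ) ⊔ {l = m}`, where
`R(l,m)=(−l,−m)`, `S(l,m)=(m,l)`, `T(l,m)=(l−m,−m)`,
`I = {l ≥ 1, 0 ≤ m ≤ l−1}` and `Ĩ = {l ≥ 2, 1 ≤ m ≤ l−1}`. -/
theorem lattice_decomposition_G3 :
    let R : ℤ × ℤ → ℤ × ℤ := fun x => (-x.1, -x.2)
    let S : ℤ × ℤ → ℤ × ℤ := fun x => (x.2, x.1)
    let T : ℤ × ℤ → ℤ × ℤ := fun x => (x.1 - x.2, -x.2)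
    let I : Set (ℤ × ℤ) := {x | 1 ≤ x.1 ∧ 0 ≤ x.2 ∧ x.2 ≤ x.1 - 1}
    let Itilde : Set (ℤ × ℤ) := {x | 2 ≤ x.1 ∧ 1 ≤ x.2 ∧ x.2 ≤ x.1 - 1}
    let pieces : Fin 7 → Set (ℤ × ℤ) :=
      ![I, R '' I, S '' I, (R ∘ S) '' I, T '' Itilde, (R ∘ T) '' Itilde,
        {x | x.1 = x.2}]
    ∀ x : ℤ × ℤ, ∃! i : Fin 7, x ∈ pieces i := by
  intro R S T I Itilde pieces x
  have h0 : x ∈ pieces 0 ↔ 0 ≤ x.2 ∧ x.2 < x.1 := by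
    show x ∈ I ↔ _
    simp only [I, Set.mem_setOf_eq]
    omega
  have h1 : x ∈ pieces 1 ↔ x.1 < x.2 ∧ x.2 ≤ 0 := by
    show x ∈ R '' I ↔ _
    constructor
    · rintro ⟨⟨a, b⟩, ⟨p, q, r⟩, rfl⟩
      simp only [R, I] at *
      omega
    · intro h
      refine ⟨(-x.1, -x.2), ⟨?_, ?_, ?_⟩, ?_⟩ <;> simp [R] <;> omega
  have h2 : x ∈ pieces 2 ↔ 0 ≤ x.1 ∧ x.1 < x.2 := by
    show x ∈ S '' I ↔ _
    constructor
    · rintro ⟨⟨a, b⟩, ⟨p, q, r⟩, rfl⟩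
      simp only [S, I] at *
      omega
    · intro h
      refine ⟨(x.2, x.1), ⟨?_, ?_, ?_⟩, ?_⟩ <;> simp [S] <;> omega
  have h3 : x ∈ pieces 3 ↔ x.2 < x.1 ∧ x.1 ≤ 0 := by
    show x ∈ (R ∘ S) '' I ↔ _
    constructor
    · rintro ⟨⟨a, b⟩, ⟨p, q, r⟩, rfl⟩
      simp only [R, S, I, Function.comp] at *
      omega
    · intro h
      refine ⟨(-x.2, -x.1), ⟨?_, ?_, ?_⟩, ?_⟩ <;> simp [R, S] <;> omega
  have h4 : x ∈ pieces 4 ↔ 1 ≤ x.1 ∧ x.2 ≤ -1 := by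
    show x ∈ T '' Itilde ↔ _
    constructor
    · rintro ⟨⟨a, b⟩, ⟨p, q, r⟩, rfl⟩
      simp only [T, Itilde] at *
      omega
    · intro h
      refine ⟨(x.1 - x.2, -x.2), ⟨?_, ?_, ?_⟩, ?_⟩ <;> simp [T] <;> omega
  have h5 : x ∈ pieces 5 ↔ x.1 ≤ -1 ∧ 1 ≤ x.2 := by
    show x ∈ (R ∘ T) '' Itilde ↔ _
    constructor
    · rintro ⟨⟨a, b⟩, ⟨p, q, r⟩, rfl⟩
      simp only [R, T, Itilde, Function.comp] at *
      omega
    · intro h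
      refine ⟨(x.2 - x.1, x.2), ⟨?_, ?_, ?_⟩, ?_⟩ <;> simp [R, T] <;> omega
  have h6 : x ∈ pieces 6 ↔ x.1 = x.2 := by
    show x ∈ {x : ℤ × ℤ | x.1 = x.2} ↔ _
    simp
  have key : ∀ i : Fin 7, x ∈ pieces i →
      (i = 0 ∧ 0 ≤ x.2 ∧ x.2 < x.1) ∨ (i = 1 ∧ x.1 < x.2 ∧ x.2 ≤ 0) ∨
      (i = 2 ∧ 0 ≤ x.1 ∧ x.1 < x.2) ∨ (i = 3 ∧ x.2 < x.1 ∧ x.1 ≤ 0) ∨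
      (i = 4 ∧ 1 ≤ x.1 ∧ x.2 ≤ -1) ∨ (i = 5 ∧ x.1 ≤ -1 ∧ 1 ≤ x.2) ∨
      (i = 6 ∧ x.1 = x.2) := by
    intro i hi
    fin_cases i
    · exact Or.inl ⟨rfl, h0.mp hi⟩
    · exact Or.inr <| Or.inl ⟨rfl, h1.mp hi⟩
    · exact Or.inr <| Or.inr <| Or.inl ⟨rfl, h2.mp hi⟩
    · exact Or.inr <| Or.inr <| Or.inr <| Or.inl ⟨rfl, h3.mp hi⟩
    · exact Or.inr <| Or.inr <| Or.inr <| Or.inr <| Or.inl ⟨rfl, h4.mp hi⟩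
    · exact Or.inr <| Or.inr <| Or.inr <| Or.inr <| Or.inr <| Or.inl ⟨rfl, h5.mp hi⟩
    · exact Or.inr <| Or.inr <| Or.inr <| Or.inr <| Or.inr <| Or.inr ⟨rfl, h6.mp hi⟩
  have uniq : ∀ j : Fin 7, x ∈ pieces j → ∀ i : Fin 7, x ∈ pieces i → i = j := by
    intro j hj i hi
    rcases key i hi with ⟨rfl, hc⟩ | ⟨rfl, hc⟩ | ⟨rfl, hc⟩ | ⟨rfl, hc⟩ |
      ⟨rfl, hc⟩ | ⟨rfl, hc⟩ | ⟨rfl, hc⟩ <;>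
    rcases key j hj with ⟨rfl, hd⟩ | ⟨rfl, hd⟩ | ⟨rfl, hd⟩ | ⟨rfl, hd⟩ |
      ⟨rfl, hd⟩ | ⟨rfl, hd⟩ | ⟨rfl, hd⟩ <;>
    first | rfl | (exfalso; omega)
  rcases lt_trichotomy x.1 x.2 with h | h | h
  · rcases le_or_gt 0 x.1 with h' | h'
    · exact ⟨2, h2.mpr ⟨h', h⟩, uniq 2 (h2.mpr ⟨h', h⟩)⟩
    · rcases le_or_gt x.2 0 with h'' | h''
      · exact ⟨1, h1.mpr ⟨h, h''⟩, uniq 1 (h1.mpr ⟨h, h''⟩)⟩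
      · exact ⟨5, h5.mpr ⟨by omega, by omega⟩, uniq 5 (h5.mpr ⟨by omega, by omega⟩)⟩
  · exact ⟨6, h6.mpr h, uniq 6 (h6.mpr h)⟩
  · rcases le_or_gt 0 x.2 with h' | h'
    · exact ⟨0, h0.mpr ⟨h', h⟩, uniq 0 (h0.mpr ⟨h', h⟩)⟩
    · rcases le_or_gt x.1 0 with h'' | h''
      · exact ⟨3, h3.mpr ⟨h, h''⟩, uniq 3 (h3.mpr ⟨h, h''⟩)⟩
      · exact ⟨4, h4.mpr ⟨by omega, by omega⟩, uniq 4 (h4.mpr ⟨by omega, by omega⟩)⟩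
end

section
/- For a function f : ℤ² → ℝ invariant under R, S, T (with R(l,m)=(−l,−m), S(l,m)=(m,l), T(l,m)=(l−m,−m)) and absolutely summable, the sum of f over ℤ² equals 6·(sum over I) − (sum over {m=0}) + f(0,0) + (sum over {l=m}), where I = {(l,m) : l ≥ 1, 0 ≤ m ≤ l−1}. -/
/-!
The composite `σ(l, m) = (m, m - l)` of `R`, `S` and `T` is a rotation of order six of the
triangular lattice under which `f` is invariant. Its iterates carry `I` onto six sectors that
tile `ℤ² \ {0}`, so the total sum is `f(0,0) + 6 · ∑_I f`. Finally `f(l,l) = f(l,0)`, so the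
two line sums in the claimed formula cancel.
-/

open Function

namespace Hexagonal

def rotate : ℤ × ℤ ≃ ℤ × ℤ where
  toFun x := (x.2, x.2 - x.1)
  invFun x := (x.1 - x.2, x.1)
  left_inv x := by simp
  right_inv x := by simp

def sector : Fin 6 → Set (ℤ × ℤ) :=
  ![{x | 0 ≤ x.2 ∧ x.2 < x.1}, {x | x.2 < 0 ∧ 0 ≤ x.1}, {x | x.2 ≤ x.1 ∧ x.1 < 0},
    {x | x.1 < x.2 ∧ x.2 ≤ 0}, {x | x.1 ≤ 0 ∧ 0 < x.2}, {x | 0 < x.1 ∧ x.1 ≤ x.2}]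

lemma sector_zero : sector 0 = {x : ℤ × ℤ | 1 ≤ x.1 ∧ 0 ≤ x.2 ∧ x.2 ≤ x.1 - 1} := by
  ext x
  simp only [sector, Matrix.cons_val_zero, Set.mem_ofPred_eq]
  omega

lemma image_rotate_sector (k : Fin 6) : rotate '' sector k = sector (k + 1) := by
  ext x
  rw [Equiv.image_eq_preimage_symm]
  fin_cases k <;>
    simp only [rotate, Equiv.symm_mk, Equiv.coe_fn_mk, sector, Fin.reduceAdd,
      Set.preimage_ofPred_eq, Set.mem_ofPred_eq, Fin.zero_eta, Fin.mk_one, Fin.reduceFinMk,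
      Matrix.cons_val, Matrix.cons_val_zero, Matrix.cons_val_one] <;>
    omega

lemma pairwise_disjoint_sector : Pairwise (Disjoint on sector) := by
  intro i j hij
  rw [onFun, Set.disjoint_left]
  intro x hi hj
  fin_cases i <;> fin_cases j <;> first
    | exact absurd rfl hij
    | simp only [sector, Set.mem_ofPred_eq, Fin.zero_eta, Fin.mk_one, Fin.reduceFinMk,
        Matrix.cons_val, Matrix.cons_val_zero, Matrix.cons_val_one] at hi hj
      omega

lemma iUnion_sector : ⋃ k, sector k = {(0, 0)}ᶜ := by
  ext ⟨a, b⟩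
  simp only [sector, Set.mem_iUnion, Fin.exists_fin_succ, Fin.isValue, Matrix.cons_val_zero,
    Matrix.cons_val_succ, Matrix.cons_val_fin_one, Set.mem_ofPred_eq, exists_const,
    Set.mem_compl_iff, Set.mem_singleton_iff, Prod.mk.injEq]
  omega

section Invariant

variable {α : Type*} {f : ℤ × ℤ → α}

lemma apply_rotate_of_invariant (hR : ∀ x : ℤ × ℤ, f (-x.1, -x.2) = f x)
    (hS : ∀ x : ℤ × ℤ, f (x.2, x.1) = f x) (hT : ∀ x : ℤ × ℤ, f (x.1 - x.2, -x.2) = f x)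
    (x : ℤ × ℤ) : f (rotate x) = f x :=
  calc f (x.2, x.2 - x.1) = f (-x.2, x.1 - x.2) := by simpa using hR (-x.2, x.1 - x.2)
    _ = f (x.1 - x.2, -x.2) := hS (x.1 - x.2, -x.2)
    _ = f x := hT x

lemma apply_diag_of_invariant (hR : ∀ x : ℤ × ℤ, f (-x.1, -x.2) = f x)
    (hS : ∀ x : ℤ × ℤ, f (x.2, x.1) = f x) (hT : ∀ x : ℤ × ℤ, f (x.1 - x.2, -x.2) = f x)
    (l : ℤ) : f (l, l) = f (l, 0) :=
  calc f (l, l) = f (0, -l) := by simpa using (hT (l, l)).symm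
    _ = f (0, l) := by simpa using hR (0, l)
    _ = f (l, 0) := hS (l, 0)

lemma tsum_sector_of_apply_rotate [AddCommMonoid α] [TopologicalSpace α]
    (hf : ∀ x, f (rotate x) = f x) (k : Fin 6) :
    ∑' x : sector k, f x = ∑' x : sector 0, f x := by
  induction k using Fin.induction with
  | zero => rfl
  | succ i ih =>
    rw [← Fin.coeSucc_eq_succ, ← image_rotate_sector, tsum_image f rotate.injective.injOn, ← ih]
    exact tsum_congr fun x => hf x

lemma tsum_eq_add_nsmul_tsum_sector [AddCommGroup α] [UniformSpace α] [IsUniformAddGroup α]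
    [CompleteSpace α] [T2Space α] (hsum : Summable f) (hf : ∀ x, f (rotate x) = f x) :
    ∑' x, f x = f (0, 0) + 6 • ∑' x : sector 0, f x := by
  have hunion : ⋃ k ∈ Finset.univ, sector k = {(0, 0)}ᶜ := by simpa using iUnion_sector
  calc ∑' x, f x
        = ∑' x : ({(0, 0)} : Set (ℤ × ℤ)), f x + ∑' x : ↑({(0, 0)}ᶜ : Set (ℤ × ℤ)), f x :=
        (Summable.tsum_add_tsum_compl (hsum.subtype _) (hsum.subtype _)).symm
    _ = f (0, 0) + ∑ k, ∑' x : sector k, f x := by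
        rw [tsum_singleton, ← hunion, Summable.tsum_finset_bUnion_disjoint
          (pairwise_disjoint_sector.set_pairwise _) fun k _ => hsum.subtype _]
    _ = f (0, 0) + 6 • ∑' x : sector 0, f x := by
        simp [tsum_sector_of_apply_rotate hf]

end Invariant

end Hexagonal

open Hexagonal in
/-- For `f : ℤ² → ℝ` absolutely summable and invariant under `R`, `S`, `T`, the
sum over `ℤ²` equals `6·(sum over I) − (sum over {m=0}) + f(0,0) + (sum over {l=m})`. -/
theorem sum_decomposition_G3
    (f : ℤ × ℤ → ℝ)
    (habs : Summable fun x : ℤ × ℤ => |f x|)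
    (hR : ∀ x : ℤ × ℤ, f (-x.1, -x.2) = f x)
    (hS : ∀ x : ℤ × ℤ, f (x.2, x.1) = f x)
    (hT : ∀ x : ℤ × ℤ, f (x.1 - x.2, -x.2) = f x) :
    ∑' x : ℤ × ℤ, f x =
      6 * (∑' x : {x : ℤ × ℤ // 1 ≤ x.1 ∧ 0 ≤ x.2 ∧ x.2 ≤ x.1 - 1}, f x.1) -
        (∑' l : ℤ, f (l, 0)) + f (0, 0) + ∑' l : ℤ, f (l, l) := by
  have hI : ∑' x : sector 0, f x =
      ∑' x : {x : ℤ × ℤ // 1 ≤ x.1 ∧ 0 ≤ x.2 ∧ x.2 ≤ x.1 - 1}, f x.1 := by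
    rw [sector_zero]
    rfl
  rw [tsum_eq_add_nsmul_tsum_sector habs.of_abs (apply_rotate_of_invariant hR hS hT),
    tsum_congr (apply_diag_of_invariant hR hS hT), hI, nsmul_eq_mul]
  push_cast
  ring
end
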